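/- If (b_k)_{k≥1} is any sequence of positive integers such that for every n ≥ 1 the product s_{b_{T_n}}∘s_{b_{T_n−1}}∘⋯∘s_{b_1} (with T_n = n(n−1)/2) equals the permutation sending i to n+1−i for 1 ≤ i ≤ n and fixing all i > n, then (b_k) equals the canonical sequence (c_k); i.e., the reduced sequence of simple reflections compatible with the standard inclusions S_1 ⊂ S_2 ⊂ ⋯ ⊂ S_∞ is unique and equals 1, 2,1, 3,2,1, 4,3,2,1, …. -/
import Mathlib


noncomputable section

/-- The adjacent transposition `s i` of `i` and `i + 1`, viewed as a permutation of the
positive integers (inside `ℕ`) fixing all other points. -/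
def sperm (i : ℕ) : Equiv.Perm ℕ := Equiv.swap i (i + 1)

/-- `wordProd a j = s_{a j} ∘ s_{a (j-1)} ∘ ⋯ ∘ s_{a 1}` (rightmost factor acting first). -/
def wordProd (a : ℕ → ℕ) : ℕ → Equiv.Perm ℕ
  | 0 => 1
  | j + 1 => sperm (a (j + 1)) * wordProd a j

/-- The cycle `(1 2 ⋯ m)` sending `i` to `i + 1` for `1 ≤ i ≤ m − 1` and `m` to `1`,
realized as `s₁ ∘ s₂ ∘ ⋯ ∘ s_{m−1}`. -/
def cycleP (m : ℕ) : Equiv.Perm ℕ := (((List.range' 1 (m - 1)).map sperm).prod)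

/-- The canonical sequence `1; 2,1; 3,2,1; 4,3,2,1; …`:
`c (m(m−1)/2 + i) = m + 1 − i` for `1 ≤ i ≤ m`. -/
def IsCanonSeqA (c : ℕ → ℕ) : Prop :=
  ∀ m i, 1 ≤ i → i ≤ m → c (m * (m - 1) / 2 + i) = m + 1 - i

lemma sperm_apply (a x : ℕ) : sperm a x = if x = a then a + 1 else if x = a + 1 then a else x := by
  simp [sperm, Equiv.swap_apply_def]

lemma sperm_mul_self (a : ℕ) : sperm a * sperm a = 1 := Equiv.swap_mul_self _ _

def invF (M : ℕ) (σ : Equiv.Perm ℕ) : Finset (ℕ × ℕ) :=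
  (Finset.range M ×ˢ Finset.range M).filter (fun p => p.1 < p.2 ∧ σ p.2 < σ p.1)

lemma mem_invF {M : ℕ} {σ : Equiv.Perm ℕ} {i j : ℕ} :
    (i, j) ∈ invF M σ ↔ i < M ∧ j < M ∧ i < j ∧ σ j < σ i := by
  simp [invF, Finset.mem_filter, Finset.mem_product, and_assoc]

lemma symm_lt (M : ℕ) (σ : Equiv.Perm ℕ) (hσ : ∀ i, i < M → σ i < M) :
    ∀ y, y < M → σ.symm y < M := by
  have himg : (Finset.range M).image σ = Finset.range M := by
    apply Finset.eq_of_subset_of_card_le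
    · intro y hy
      obtain ⟨x, hx, rfl⟩ := Finset.mem_image.1 hy
      exact Finset.mem_range.2 (hσ x (Finset.mem_range.1 hx))
    · rw [Finset.card_image_of_injective _ σ.injective]
  intro y hy
  have hy' : y ∈ (Finset.range M).image σ := by rw [himg]; exact Finset.mem_range.2 hy
  obtain ⟨x, hx, hxy⟩ := Finset.mem_image.1 hy'
  have hx2 : σ.symm y = x := by rw [← hxy, Equiv.symm_apply_apply]
  rw [hx2]; exact Finset.mem_range.1 hx

lemma swap_lt_iff (a X Y : ℕ) :
    ((if Y = a then a + 1 else if Y = a + 1 then a else Y) <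
      (if X = a then a + 1 else if X = a + 1 then a else X)) ↔
    ((X = a ∧ Y = a + 1) ∨ (¬(X = a + 1 ∧ Y = a) ∧ Y < X)) := by
  split_ifs <;> omega

lemma invF_step (M aa : ℕ) (σ : Equiv.Perm ℕ) (ha : aa + 1 < M) (hσ : ∀ i, i < M → σ i < M)
    (hlt : σ.symm aa < σ.symm (aa + 1)) :
    invF M (sperm aa * σ) = insert (σ.symm aa, σ.symm (aa + 1)) (invF M σ) ∧
      (σ.symm aa, σ.symm (aa + 1)) ∉ invF M σ := by
  have hsym := symm_lt M σ hσ
  have hpM : σ.symm aa < M := hsym aa (by omega)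
  have hqM : σ.symm (aa + 1) < M := hsym (aa + 1) ha
  constructor
  · ext ⟨i, j⟩
    simp only [mem_invF, Finset.mem_insert, Prod.mk.injEq, Equiv.Perm.mul_apply]
    have hXa : σ i = aa ↔ i = σ.symm aa := by rw [Equiv.apply_eq_iff_eq_symm_apply]
    have hXa1 : σ i = aa + 1 ↔ i = σ.symm (aa + 1) := by rw [Equiv.apply_eq_iff_eq_symm_apply]
    have hYa : σ j = aa ↔ j = σ.symm aa := by rw [Equiv.apply_eq_iff_eq_symm_apply]
    have hYa1 : σ j = aa + 1 ↔ j = σ.symm (aa + 1) := by rw [Equiv.apply_eq_iff_eq_symm_apply]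
    have hinj : σ i = σ j ↔ i = j := Equiv.apply_eq_iff_eq σ
    rw [sperm_apply aa (σ j), sperm_apply aa (σ i), swap_lt_iff]
    omega
  · intro hmem
    rw [mem_invF] at hmem
    obtain ⟨_, _, _, h4⟩ := hmem
    rw [σ.apply_symm_apply, σ.apply_symm_apply] at h4
    omega

lemma symm_mul_sperm (aa : ℕ) (σ : Equiv.Perm ℕ) (y : ℕ) :
    (sperm aa * σ).symm y = σ.symm (sperm aa y) := by
  rw [Equiv.symm_apply_eq, Equiv.Perm.mul_apply, σ.apply_symm_apply, sperm_apply,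
    sperm_apply]
  split_ifs <;> omega

lemma invF_step_card (M aa : ℕ) (σ : Equiv.Perm ℕ) (ha : aa + 1 < M)
    (hσ : ∀ i, i < M → σ i < M) :
    (σ.symm aa < σ.symm (aa + 1) ∧ (invF M (sperm aa * σ)).card = (invF M σ).card + 1) ∨
    (σ.symm (aa + 1) < σ.symm aa ∧ (invF M σ).card = (invF M (sperm aa * σ)).card + 1) := by
  rcases lt_trichotomy (σ.symm aa) (σ.symm (aa + 1)) with h | h | h
  · left
    obtain ⟨he, hn⟩ := invF_step M aa σ ha hσ h
    exact ⟨h, by rw [he, Finset.card_insert_of_notMem hn]⟩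
  · exfalso; have := σ.symm.injective h; omega
  · right
    refine ⟨h, ?_⟩
    have hτ : ∀ i, i < M → (sperm aa * σ) i < M := by
      intro i hi
      have h1 := hσ i hi
      rw [Equiv.Perm.mul_apply, sperm_apply]
      split_ifs <;> omega
    have hτs : (sperm aa * σ).symm aa < (sperm aa * σ).symm (aa + 1) := by
      rw [symm_mul_sperm, symm_mul_sperm, sperm_apply, sperm_apply]
      split_ifs <;> omega
    obtain ⟨he, hn⟩ := invF_step M aa (sperm aa * σ) ha hτ hτs
    have hτσ : sperm aa * (sperm aa * σ) = σ := by rw [← mul_assoc, sperm_mul_self, one_mul]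
    rw [hτσ] at he
    rw [symm_mul_sperm, symm_mul_sperm, sperm_apply, sperm_apply] at he hn
    rw [he, Finset.card_insert_of_notMem hn]

def cfun (k m i : ℕ) : ℕ :=
  if i < k then i else if i < k + m then i + 1 else if i = k + m then k else i

def gfun (k m y : ℕ) : ℕ :=
  if y < k then y else if y = k then k + m else if y ≤ k + m then y - 1 else y

lemma usymm (k m : ℕ) (u : Equiv.Perm ℕ) (h : ∀ i, u i = cfun k m i) :
    ∀ y, u.symm y = gfun k m y := by
  intro y
  rw [Equiv.symm_apply_eq, h]
  simp only [cfun, gfun]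
  split_ifs <;> omega

lemma invF_cycle (M k m : ℕ) (hk : 1 ≤ k) (hM : k + m < M) (u : Equiv.Perm ℕ)
    (h : ∀ i, u i = cfun k m i) : (invF M u).card = m := by
  have hset : invF M u = (Finset.range m).image (fun t => (k + t, k + m)) := by
    ext ⟨i, j⟩
    simp only [mem_invF, Finset.mem_image, Finset.mem_range, Prod.mk.injEq]
    rw [h i, h j]
    constructor
    · rintro ⟨h1, h2, h3, h4⟩
      simp only [cfun] at h4
      split_ifs at h4 <;> exact ⟨i - k, by omega, by omega, by omega⟩
    · rintro ⟨t, ht, rfl, rfl⟩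
      refine ⟨by omega, by omega, by omega, ?_⟩
      simp only [cfun]
      split_ifs <;> omega
  rw [hset, Finset.card_image_of_injective, Finset.card_range]
  intro x y hxy
  simp only [Prod.mk.injEq] at hxy
  omega

lemma wordProd_bound (M : ℕ) (a : ℕ → ℕ) :
    ∀ j, (∀ i, 1 ≤ i → i ≤ j → a i + 1 < M) →
    (∀ x, x < M → wordProd a j x < M) ∧ (invF M (wordProd a j)).card ≤ j := by
  intro j
  induction j with
  | zero =>
    intro _
    constructor
    · intro x hx; simpa [wordProd] using hx
    · have : invF M (wordProd a 0) = ∅ := by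
        ext ⟨i, j⟩
        simp only [mem_invF, Finset.notMem_empty, iff_false, wordProd, Equiv.Perm.one_apply]
        omega
      simp [this]
  | succ j ihj =>
    intro hA
    obtain ⟨h1, h2⟩ := ihj (fun i hi1 hi2 => hA i hi1 (by omega))
    have ha : a (j + 1) + 1 < M := hA (j + 1) (by omega) le_rfl
    have e : wordProd a (j + 1) = sperm (a (j + 1)) * wordProd a j := rfl
    constructor
    · intro x hx
      rw [e, Equiv.Perm.mul_apply, sperm_apply]
      have := h1 x hx
      split_ifs <;> omega
    · rw [e]
      rcases invF_step_card M (a (j + 1)) (wordProd a j) ha h1 with ⟨_, hcard⟩ | ⟨_, hcard⟩ <;>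
        omega

lemma key : ∀ m k (a : ℕ → ℕ), 1 ≤ k → (∀ i, wordProd a m i = cfun k m i) →
    ∀ j, 1 ≤ j → j ≤ m → a j = k + m - j := by
  intro m
  induction m with
  | zero => intro k a _ _ j h1 h2; omega
  | succ m ih =>
    intro k a hk h j hj1 hj2
    have hue : wordProd a (m + 1) = sperm (a (m + 1)) * wordProd a m := rfl
    set u := wordProd a (m + 1) with hu
    set σ := wordProd a m with hσdef
    set e := a (m + 1) with he
    set M := (Finset.range (m + 2)).sup (fun i => a i + 2) + (k + m + 2) with hM
    have hMa : ∀ i, i ≤ m + 1 → a i + 1 < M := by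
      intro i hi
      have h1 : a i + 2 ≤ (Finset.range (m + 2)).sup (fun i => a i + 2) :=
        Finset.le_sup (s := Finset.range (m + 2)) (f := fun i => a i + 2)
          (Finset.mem_range.2 (by omega))
      omega
    obtain ⟨hmaps, hcardσ⟩ := wordProd_bound M a m (fun i h1i h2i => hMa i (by omega))
    rw [← hσdef] at hmaps hcardσ
    have hcardu : (invF M u).card = m + 1 := invF_cycle M k (m + 1) hk (by omega) u h
    have husymm : ∀ y, u.symm y = gfun k (m + 1) y := usymm k (m + 1) u h
    have hσu : σ = sperm e * u := by rw [hue, ← mul_assoc, sperm_mul_self, one_mul]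
    rcases invF_step_card M e σ (hMa (m + 1) le_rfl) hmaps with ⟨hcond, _⟩ | ⟨_, hcards⟩
    · have hA : σ.symm e = u.symm (e + 1) := by
        rw [hσu, symm_mul_sperm, sperm_apply]
        split_ifs <;> omega
      have hB : σ.symm (e + 1) = u.symm e := by
        rw [hσu, symm_mul_sperm, sperm_apply]
        split_ifs with h1 h2
        · omega
        · rfl
        · omega
      have heq : e = k := by
        rw [hA, hB, husymm, husymm] at hcond
        simp only [gfun] at hcond
        split_ifs at hcond <;> omega
      by_cases hj : j = m + 1
      · subst hj; rw [← he]; omega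
      · have hσc : ∀ i, σ i = cfun (k + 1) m i := by
          intro i
          have h0 : σ i = sperm e (u i) := by rw [hσu]; rfl
          rw [h0, h i, heq, sperm_apply]
          simp only [cfun]
          split_ifs <;> omega
        have := ih (k + 1) a (by omega) hσc j hj1 (by omega)
        omega
    · exfalso
      rw [← hue] at hcards
      omega

lemma wordProd_shift (b : ℕ → ℕ) (N : ℕ) :
    ∀ m, wordProd (fun j => b (N + j)) m * wordProd b N = wordProd b (N + m) := by
  intro m
  induction m with
  | zero => simp [wordProd]
  | succ m ih =>
    have e1 : wordProd b (N + (m + 1)) = sperm (b (N + (m + 1))) * wordProd b (N + m) := rfl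
    have e2 : wordProd (fun j => b (N + j)) (m + 1) =
        sperm (b (N + (m + 1))) * wordProd (fun j => b (N + j)) m := rfl
    rw [e1, e2, mul_assoc, ih]

lemma fix0 (W : Equiv.Perm ℕ) (n : ℕ) (hn : 1 ≤ n)
    (h1 : ∀ i, 1 ≤ i → i ≤ n → W i = n + 1 - i) (h2 : ∀ i, n < i → W i = i) : W 0 = 0 := by
  have h := W.apply_symm_apply 0
  by_cases hx : 1 ≤ W.symm 0 ∧ W.symm 0 ≤ n
  · rw [h1 _ hx.1 hx.2] at h; omega
  · by_cases hx2 : n < W.symm 0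
    · rw [h2 _ hx2] at h; omega
    · have h0 : W.symm 0 = 0 := by omega
      exact (congrArg W h0).symm.trans h

lemma Wsymm (W : Equiv.Perm ℕ) (n : ℕ) (hn : 1 ≤ n)
    (h1 : ∀ i, 1 ≤ i → i ≤ n → W i = n + 1 - i) (h2 : ∀ i, n < i → W i = i) :
    ∀ i, W.symm i = if 1 ≤ i ∧ i ≤ n then n + 1 - i else i := by
  intro i
  rw [Equiv.symm_apply_eq]
  split_ifs with hi
  · rw [h1 (n + 1 - i) (by omega) (by omega)]; omega
  · rcases (by omega : i = 0 ∨ n < i) with rfl | hi2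
    · exact (fix0 W n hn h1 h2).symm
    · exact (h2 i hi2).symm

lemma Tsucc (n : ℕ) (hn : 1 ≤ n) : (n + 1) * ((n + 1) - 1) / 2 = n * (n - 1) / 2 + n := by
  obtain ⟨m, rfl⟩ : ∃ m, n = m + 1 := ⟨n - 1, by omega⟩
  simp only [Nat.add_sub_cancel]
  have h2 : (m + 1 + 1) * (m + 1) = (m + 1) * m + 2 * (m + 1) := by ring
  omega


/-- the canonical sequence is the unique sequence of positive integers whose
prefixes of length `T_n = n(n−1)/2` are reduced words for the longest elements of
`S_1 ⊂ S_2 ⊂ ⋯ ⊂ S_∞`. -/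
theorem stmt16 (c : ℕ → ℕ) (hc : IsCanonSeqA c)
    (b : ℕ → ℕ) (hbpos : ∀ k, 1 ≤ k → 1 ≤ b k)
    (hb : ∀ n, 1 ≤ n →
      (∀ i, 1 ≤ i → i ≤ n → wordProd b (n * (n - 1) / 2) i = n + 1 - i) ∧
      (∀ i, n < i → wordProd b (n * (n - 1) / 2) i = i)) :
    ∀ k, 1 ≤ k → b k = c k := by
  have block : ∀ n, 1 ≤ n → ∀ j, 1 ≤ j → j ≤ n → b (n * (n - 1) / 2 + j) = n + 1 - j := by
    intro n hn
    obtain ⟨hW1, hW2⟩ := hb n hn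
    obtain ⟨hV1, hV2⟩ := hb (n + 1) (by omega)
    rw [Tsucc n hn] at hV1 hV2
    have hshift := wordProd_shift b (n * (n - 1) / 2) n
    have huP : wordProd (fun j => b (n * (n - 1) / 2 + j)) n =
        wordProd b (n * (n - 1) / 2 + n) * (wordProd b (n * (n - 1) / 2))⁻¹ :=
      eq_mul_inv_iff_mul_eq.mpr hshift
    have hWs := Wsymm (wordProd b (n * (n - 1) / 2)) n hn hW1 hW2
    have hu : ∀ i, wordProd (fun j => b (n * (n - 1) / 2 + j)) n i = cfun 1 n i := by
      intro i
      rw [huP, Equiv.Perm.mul_apply]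
      have hWinv : (wordProd b (n * (n - 1) / 2))⁻¹ i
          = (wordProd b (n * (n - 1) / 2)).symm i := rfl
      rw [hWinv, hWs i]
      by_cases h1 : 1 ≤ i ∧ i ≤ n
      · rw [if_pos h1, hV1 (n + 1 - i) (by omega) (by omega)]
        simp only [cfun]; split_ifs <;> omega
      · rw [if_neg h1]
        rcases (by omega : i = 0 ∨ n < i) with rfl | hi
        · rw [fix0 _ (n + 1) (by omega) hV1 hV2]
          simp only [cfun]; split_ifs <;> omega
        · rcases (by omega : i = n + 1 ∨ n + 1 < i) with rfl | hi2
          · rw [hV1 (n + 1) (by omega) (by omega)]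
            simp only [cfun]; split_ifs <;> omega
          · rw [hV2 i (by omega)]
            simp only [cfun]; split_ifs <;> omega
    intro j hj1 hj2
    have := key n 1 (fun j => b (n * (n - 1) / 2 + j)) le_rfl hu j hj1 hj2
    omega
  have decomp : ∀ k, 1 ≤ k → ∃ n j, 1 ≤ n ∧ 1 ≤ j ∧ j ≤ n ∧ k = n * (n - 1) / 2 + j := by
    intro k hk
    induction k with
    | zero => omega
    | succ k ih =>
      rcases (by omega : k = 0 ∨ 1 ≤ k) with rfl | hk1
      · exact ⟨1, 1, le_rfl, le_rfl, le_rfl, by norm_num⟩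
      · obtain ⟨n, j, hn, hj1, hj2, hkeq⟩ := ih hk1
        rcases (by omega : j < n ∨ j = n) with hlt | heq
        · exact ⟨n, j + 1, hn, by omega, by omega, by omega⟩
        · refine ⟨n + 1, 1, by omega, le_rfl, by omega, ?_⟩
          rw [Tsucc n hn]
          omega
  intro k hk
  obtain ⟨n, j, hn, hj1, hj2, rfl⟩ := decomp k hk
  rw [block n hn j hj1 hj2, hc n j hj1 hj2]
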